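/- Let σ : ℝ → ℝ be the GeLU function σ(x) = x·Φ(x), where Φ is the standard normal cumulative distribution function. For every ε > 0 and every M > 0, there exists λ > 0 such that, setting f(a,b) = (√(2π)·λ²/8)·(σ((a+b)/λ) + σ((-a-b)/λ) − σ((a−b)/λ) − σ((−a+b)/λ)), one has |f(a,b) − a·b| ≤ ε for all a, b ∈ [-M, M]. In other words, a two-layer MLP with GeLU activation, input dimension 2, hidden dimension 4 and output dimension 1 can approximate the multiplication map (a,b) ↦ a·b uniformly on [-M,M]² to accuracy ε. -/

import Mathlib

/-!
With `E(y) = σ(y) + σ(-y)` and `c = √(2π)/8` the network is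
`f(a,b) = c λ² (E((a+b)/λ) - E((a-b)/λ))`, while `ab = ((a+b)² - (a-b)²)/4`, so it suffices that
`c λ² E(u/λ)` is within `O(u⁴/λ²)` of `u²/4`. Since `Φ(y) = 1/2 + (2π)^{-1/2} ∫₀^y e^{-t²/2} dt`
and this integral is odd, `E(y) = 2 (2π)^{-1/2} y ∫₀^y e^{-t²/2} dt`, and `|e^{-t²/2} - 1| ≤ t²/2`
gives `|y ∫₀^y e^{-t²/2} dt - y²| ≤ y⁴/2`. Taking `λ = 2M²/√ε` makes the total error `ε`.
-/

/-- The standard normal cumulative distribution function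
`Φ(x) = (1/√(2π)) ∫_{-∞}^x e^{-t²/2} dt`. -/
noncomputable def stdNormalCDF (x : ℝ) : ℝ :=
  (1 / Real.sqrt (2 * Real.pi)) * ∫ t in Set.Iic x, Real.exp (-(t ^ 2) / 2)

/-- The GeLU activation function `σ(x) = x·Φ(x)`. -/
noncomputable def gelu (x : ℝ) : ℝ := x * stdNormalCDF x

/-- A two-layer GeLU MLP (input dim 2, hidden dim 4, output dim 1) approximating
multiplication:
`f(a,b) = (√(2π)·λ²/8)·(σ((a+b)/λ) + σ((-a-b)/λ) − σ((a−b)/λ) − σ((−a+b)/λ))`. -/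
noncomputable def geluMulMLP (lam a b : ℝ) : ℝ :=
  Real.sqrt (2 * Real.pi) * lam ^ 2 / 8 *
    (gelu ((a + b) / lam) + gelu ((-a - b) / lam) - gelu ((a - b) / lam)
      - gelu ((-a + b) / lam))

open Real Set MeasureTheory intervalIntegral

lemma exp_neg_sq_div_two_eq (t : ℝ) : exp (-(t ^ 2) / 2) = exp (-(1 / 2) * t ^ 2) := by
  ring_nf

lemma integrable_exp_neg_sq_div_two : Integrable fun t : ℝ => exp (-(t ^ 2) / 2) := by
  simpa only [exp_neg_sq_div_two_eq] using
    integrable_exp_neg_mul_sq (by norm_num : (0 : ℝ) < 1 / 2)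

lemma integral_Iic_zero_exp_neg_sq_div_two :
    ∫ t in Iic (0 : ℝ), exp (-(t ^ 2) / 2) = √(2 * π) / 2 := by
  have hsymm := integral_comp_neg_Iic 0 fun t : ℝ => exp (-(t ^ 2) / 2)
  simp only [neg_sq, neg_zero] at hsymm
  rw [hsymm]
  simp only [exp_neg_sq_div_two_eq, integral_gaussian_Ioi]
  norm_num [div_div_eq_mul_div, mul_comm]

lemma stdNormalCDF_eq_half_add (x : ℝ) :
    stdNormalCDF x = 1 / 2 + (√(2 * π))⁻¹ * ∫ t in (0 : ℝ)..x, exp (-(t ^ 2) / 2) := by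
  have hsplit := integral_Iic_sub_Iic (μ := volume) (a := 0) (b := x)
    integrable_exp_neg_sq_div_two.integrableOn integrable_exp_neg_sq_div_two.integrableOn
  rw [stdNormalCDF, ← hsplit, integral_Iic_zero_exp_neg_sq_div_two]
  field_simp
  ring

lemma intervalIntegral_exp_neg_sq_div_two_neg (y : ℝ) :
    ∫ t in (0 : ℝ)..-y, exp (-(t ^ 2) / 2) = -∫ t in (0 : ℝ)..y, exp (-(t ^ 2) / 2) := by
  have h := integral_comp_neg (a := 0) (b := -y) fun t : ℝ => exp (-(t ^ 2) / 2)
  simp only [neg_sq, neg_zero, neg_neg] at h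
  rw [h, integral_symm]

lemma gelu_add_gelu_neg (y : ℝ) :
    gelu y + gelu (-y) = 2 * (√(2 * π))⁻¹ * (y * ∫ t in (0 : ℝ)..y, exp (-(t ^ 2) / 2)) := by
  simp only [gelu, stdNormalCDF_eq_half_add, intervalIntegral_exp_neg_sq_div_two_neg]
  ring

lemma abs_exp_neg_sub_one_le {s : ℝ} (hs : 0 ≤ s) : |exp (-s) - 1| ≤ s := by
  have hle : exp (-s) ≤ 1 := exp_le_one_iff.mpr (neg_nonpos.mpr hs)
  have hge := add_one_le_exp (-s)
  rw [abs_sub_comm, abs_of_nonneg (sub_nonneg.mpr hle)]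
  linarith

lemma abs_mul_intervalIntegral_exp_neg_sq_div_two_sub_sq_le (x : ℝ) :
    |x * (∫ t in (0 : ℝ)..x, exp (-(t ^ 2) / 2)) - x ^ 2| ≤ x ^ 4 / 2 := by
  have hdiff : (∫ t in (0 : ℝ)..x, exp (-(t ^ 2) / 2)) - x
      = ∫ t in (0 : ℝ)..x, (exp (-(t ^ 2) / 2) - 1) := by
    simp [integral_sub integrable_exp_neg_sq_div_two.intervalIntegrable intervalIntegrable_const]
  have hbound : |∫ t in (0 : ℝ)..x, (exp (-(t ^ 2) / 2) - 1)| ≤ x ^ 2 / 2 * |x - 0| := by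
    rw [← norm_eq_abs]
    refine intervalIntegral.norm_integral_le_of_norm_le_const fun t ht => ?_
    have ht2 : t ^ 2 ≤ x ^ 2 := by
      rcases mem_uIoc.mp ht with ⟨h₁, h₂⟩ | ⟨h₁, h₂⟩ <;> nlinarith
    rw [norm_eq_abs, neg_div]
    exact (abs_exp_neg_sub_one_le (by positivity)).trans (by linarith)
  calc |x * (∫ t in (0 : ℝ)..x, exp (-(t ^ 2) / 2)) - x ^ 2|
      = |x| * |∫ t in (0 : ℝ)..x, (exp (-(t ^ 2) / 2) - 1)| := by
        rw [← hdiff, ← abs_mul]; ring_nf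
    _ ≤ |x| * (x ^ 2 / 2 * |x - 0|) := by gcongr
    _ = x ^ 4 / 2 := by
        rw [sub_zero, ← mul_assoc, mul_comm |x|, mul_assoc, abs_mul_abs_self]; ring

noncomputable def geluEvenMLP (lam u : ℝ) : ℝ :=
  √(2 * π) * lam ^ 2 / 8 * (gelu (u / lam) + gelu (-(u / lam)))

lemma geluMulMLP_eq_sub (lam a b : ℝ) :
    geluMulMLP lam a b = geluEvenMLP lam (a + b) - geluEvenMLP lam (a - b) := by
  have hplus : (-a - b) / lam = -((a + b) / lam) := by ring
  have hminus : (-a + b) / lam = -((a - b) / lam) := by ring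
  rw [geluMulMLP, geluEvenMLP, geluEvenMLP, hplus, hminus]
  ring

lemma abs_geluEvenMLP_sub_sq_le {lam : ℝ} (hlam : 0 < lam) (u : ℝ) :
    |geluEvenMLP lam u - u ^ 2 / 4| ≤ u ^ 4 / (8 * lam ^ 2) := by
  have heq : geluEvenMLP lam u - u ^ 2 / 4 = lam ^ 2 / 4 *
      (u / lam * (∫ t in (0 : ℝ)..u / lam, exp (-(t ^ 2) / 2)) - (u / lam) ^ 2) := by
    rw [geluEvenMLP, gelu_add_gelu_neg]
    field_simp
    ring
  calc |geluEvenMLP lam u - u ^ 2 / 4|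
      ≤ lam ^ 2 / 4 * ((u / lam) ^ 4 / 2) := by
        rw [heq, abs_mul, abs_of_nonneg (by positivity)]
        gcongr
        exact abs_mul_intervalIntegral_exp_neg_sq_div_two_sub_sq_le _
    _ = u ^ 4 / (8 * lam ^ 2) := by field_simp; ring

/-- For every `ε > 0` and `M > 0`, there is `λ > 0` such that the two-layer GeLU MLP
`f(a,b)` approximates the product `a·b` uniformly on `[-M, M]²` to accuracy `ε`. -/
theorem geluMLP_approx_mul (ε M : ℝ) (hε : 0 < ε) (hM : 0 < M) :
    ∃ lam > (0 : ℝ), ∀ a ∈ Set.Icc (-M) M, ∀ b ∈ Set.Icc (-M) M,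
      |geluMulMLP lam a b - a * b| ≤ ε := by
  set lam := 2 * M ^ 2 / √ε
  have hlam : 0 < lam := by positivity
  have hlam_sq : lam ^ 2 = 4 * M ^ 4 / ε := by
    rw [div_pow, sq_sqrt hε.le]; ring
  refine ⟨lam, hlam, fun a ⟨ha₁, ha₂⟩ b ⟨hb₁, hb₂⟩ => ?_⟩
  have hplus : (a + b) ^ 4 ≤ 16 * M ^ 4 := by
    have : (a + b) ^ 2 ≤ 4 * M ^ 2 := by nlinarith
    nlinarith
  have hminus : (a - b) ^ 4 ≤ 16 * M ^ 4 := by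
    have : (a - b) ^ 2 ≤ 4 * M ^ 2 := by nlinarith
    nlinarith
  have hsplit : geluMulMLP lam a b - a * b = (geluEvenMLP lam (a + b) - (a + b) ^ 2 / 4)
      - (geluEvenMLP lam (a - b) - (a - b) ^ 2 / 4) := by
    rw [geluMulMLP_eq_sub]; ring
  calc |geluMulMLP lam a b - a * b|
      ≤ (a + b) ^ 4 / (8 * lam ^ 2) + (a - b) ^ 4 / (8 * lam ^ 2) := by
        rw [hsplit]
        exact (abs_sub _ _).trans (add_le_add (abs_geluEvenMLP_sub_sq_le hlam _)
          (abs_geluEvenMLP_sub_sq_le hlam _))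
    _ ≤ 16 * M ^ 4 / (8 * lam ^ 2) + 16 * M ^ 4 / (8 * lam ^ 2) := by gcongr
    _ = ε := by rw [hlam_sq]; field_simp; ring
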